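/- arXiv:0803.0387 — 2 statements merged into one kernel-verified Lean document; each statement's English description precedes it below -/
import Mathlib

section
/- Let ω be a nowhere-vanishing smooth 1-form on an open set U ⊆ ℝ² and let v be a smooth vector field on U with ω(v) nowhere zero. If the Lie derivative L_v ω is a smooth-function multiple of ω, then the 1-form ω̄ = ω / ω(v) is closed, i.e., dω̄ = 0. -/
/-- Partial derivative in the first coordinate of a function on `ℝ²`. -/
noncomputable def pdx (F : ℝ × ℝ → ℝ) (p : ℝ × ℝ) : ℝ :=
  deriv (fun x => F (x, p.2)) p.1

/-- Partial derivative in the second coordinate of a function on `ℝ²`. -/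
noncomputable def pdy (F : ℝ × ℝ → ℝ) (p : ℝ × ℝ) : ℝ :=
  deriv (fun y => F (p.1, y)) p.2

lemma slice_x_diff {F : ℝ × ℝ → ℝ} {p : ℝ × ℝ} (hF : DifferentiableAt ℝ F p) :
    DifferentiableAt ℝ (fun x => F (x, p.2)) p.1 :=
  hF.comp p.1 (differentiableAt_id.prodMk (differentiableAt_const _))

lemma slice_y_diff {F : ℝ × ℝ → ℝ} {p : ℝ × ℝ} (hF : DifferentiableAt ℝ F p) :
    DifferentiableAt ℝ (fun y => F (p.1, y)) p.2 :=
  hF.comp p.2 ((differentiableAt_const _).prodMk differentiableAt_id)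

/-- Let `ω = P dx + Q dy` be a nowhere-vanishing smooth 1-form on an open
`U ⊆ ℝ²` and `v = a∂ₓ + b∂ᵧ` a smooth vector field with `ω(v) = aP + bQ` nowhere
zero on `U`.  If the Lie derivative `L_v ω = d(ι_v ω) + ι_v dω` is a smooth
multiple `fω` of `ω`, then `ω̄ = ω / ω(v)` is closed:
`∂ₓ(Q/(aP+bQ)) = ∂ᵧ(P/(aP+bQ))` on `U`. -/
theorem symmetry_gives_closed_form (U : Set (ℝ × ℝ)) (hU : IsOpen U)
    (P Q a b f : ℝ × ℝ → ℝ)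
    (hP : ContDiffOn ℝ (⊤ : ℕ∞) P U) (hQ : ContDiffOn ℝ (⊤ : ℕ∞) Q U)
    (ha : ContDiffOn ℝ (⊤ : ℕ∞) a U) (hb : ContDiffOn ℝ (⊤ : ℕ∞) b U)
    (hf : ContDiffOn ℝ (⊤ : ℕ∞) f U)
    (hω : ∀ p ∈ U, (P p, Q p) ≠ (0, 0))
    (hωv : ∀ p ∈ U, a p * P p + b p * Q p ≠ 0)
    (hLie : ∀ p ∈ U,
      pdx (fun q => a q * P q + b q * Q q) p - b p * (pdx Q p - pdy P p) = f p * P p ∧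
      pdy (fun q => a q * P q + b q * Q q) p + a p * (pdx Q p - pdy P p) = f p * Q p) :
    ∀ p ∈ U,
      pdx (fun q => Q q / (a q * P q + b q * Q q)) p
        = pdy (fun q => P q / (a q * P q + b q * Q q)) p := by
  intro p hp
  have hnhds : U ∈ nhds p := hU.mem_nhds hp
  have hPd : DifferentiableAt ℝ P p :=
    (hP.contDiffAt hnhds).differentiableAt (by simp)
  have hQd : DifferentiableAt ℝ Q p :=
    (hQ.contDiffAt hnhds).differentiableAt (by simp)
  have had : DifferentiableAt ℝ a p :=
    (ha.contDiffAt hnhds).differentiableAt (by simp)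
  have hbd : DifferentiableAt ℝ b p :=
    (hb.contDiffAt hnhds).differentiableAt (by simp)
  have hSd : DifferentiableAt ℝ (fun q => a q * P q + b q * Q q) p :=
    (had.mul hPd).add (hbd.mul hQd)
  have hS0 : a p * P p + b p * Q p ≠ 0 := hωv p hp
  have h1 := (hLie p hp).1
  have h2 := (hLie p hp).2
  have ex : pdx (fun q => Q q / (a q * P q + b q * Q q)) p
      = (pdx Q p * (a p * P p + b p * Q p)
          - Q p * pdx (fun q => a q * P q + b q * Q q) p)
        / (a p * P p + b p * Q p) ^ 2 := by
    unfold pdx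
    exact deriv_div (slice_x_diff hQd) (slice_x_diff hSd) hS0
  have ey : pdy (fun q => P q / (a q * P q + b q * Q q)) p
      = (pdy P p * (a p * P p + b p * Q p)
          - P p * pdy (fun q => a q * P q + b q * Q q) p)
        / (a p * P p + b p * Q p) ^ 2 := by
    unfold pdy
    exact deriv_div (slice_y_diff hPd) (slice_y_diff hSd) hS0
  rw [ex, ey]
  rw [div_eq_div_iff (pow_ne_zero 2 hS0) (pow_ne_zero 2 hS0)]
  linear_combination (a p * P p + b p * Q p) ^ 2 * (P p * h2 - Q p * h1)
end

section
/- Let ω = dy − f(x,y)dx be the 1-form associated to the ODE y' = f(x,y) on an open set U ⊆ ℝ², and let v = a(x,y)∂ₓ + b(x,y)∂ᵧ be a symmetry of the corresponding distribution with b − f·a nowhere zero. Then the 1-form ω̄ = (dy − f dx)/(b − f·a) is closed on U; i.e., 1/(b − f·a) is an integrating factor for the ODE. -/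
lemma diffx_aux {U : Set (ℝ × ℝ)} (hU : IsOpen U) {F : ℝ × ℝ → ℝ}
    (hF : ContDiffOn ℝ (⊤ : ℕ∞) F U) {p : ℝ × ℝ} (hp : p ∈ U) :
    DifferentiableAt ℝ (fun x => F (x, p.2)) p.1 := by
  have h1 : DifferentiableAt ℝ F p :=
    (hF.differentiableOn (by simp)).differentiableAt (hU.mem_nhds hp)
  exact h1.comp p.1 (differentiableAt_id.prodMk (differentiableAt_const _))

lemma diffy_aux {U : Set (ℝ × ℝ)} (hU : IsOpen U) {F : ℝ × ℝ → ℝ}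
    (hF : ContDiffOn ℝ (⊤ : ℕ∞) F U) {p : ℝ × ℝ} (hp : p ∈ U) :
    DifferentiableAt ℝ (fun y => F (p.1, y)) p.2 := by
  have h1 : DifferentiableAt ℝ F p :=
    (hF.differentiableOn (by simp)).differentiableAt (hU.mem_nhds hp)
  exact h1.comp p.2 ((differentiableAt_const _).prodMk differentiableAt_id)

/-- Let `ω = dy − f dx` (i.e. `P = −f`, `Q = 1`) be the 1-form of the ODE
`y' = f(x,y)` on open `U ⊆ ℝ²`, and let `v = a∂ₓ + b∂ᵧ` be a symmetry of the
distribution (`L_v ω = λω`), with `b − f·a` nowhere zero on `U`.  Then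
`ω̄ = (dy − f dx)/(b − f·a)` is closed on `U`, i.e. `1/(b − f·a)` is an
integrating factor:
`∂ₓ(1/(b − f·a)) = ∂ᵧ(−f/(b − f·a))` on `U`. -/
theorem integrating_factor_from_symmetry (U : Set (ℝ × ℝ)) (hU : IsOpen U)
    (f a b lam : ℝ × ℝ → ℝ)
    (hf : ContDiffOn ℝ (⊤ : ℕ∞) f U) (ha : ContDiffOn ℝ (⊤ : ℕ∞) a U)
    (hb : ContDiffOn ℝ (⊤ : ℕ∞) b U) (hlam : ContDiffOn ℝ (⊤ : ℕ∞) lam U)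
    (hZ : ∀ p ∈ U, b p - f p * a p ≠ 0)
    (hLie : ∀ p ∈ U,
      pdx (fun q => b q - f q * a q) p
          - b p * (pdx (fun q => (1 : ℝ)) p - pdy (fun q => -f q) p)
        = lam p * (-f p) ∧
      pdy (fun q => b q - f q * a q) p
          + a p * (pdx (fun q => (1 : ℝ)) p - pdy (fun q => -f q) p)
        = lam p * 1) :
    ∀ p ∈ U,
      pdx (fun q => 1 / (b q - f q * a q)) p
        = pdy (fun q => -f q / (b q - f q * a q)) p := by
  intro p hp
  set g : ℝ × ℝ → ℝ := fun q => b q - f q * a q with hg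
  have hgC : ContDiffOn ℝ (⊤ : ℕ∞) g U := hb.sub (hf.mul ha)
  have hgx : DifferentiableAt ℝ (fun x => g (x, p.2)) p.1 := diffx_aux hU hgC hp
  have hgy : DifferentiableAt ℝ (fun y => g (p.1, y)) p.2 := diffy_aux hU hgC hp
  have hfy : DifferentiableAt ℝ (fun y => f (p.1, y)) p.2 := diffy_aux hU hf hp
  have hgp : g p ≠ 0 := hZ p hp
  -- value of pdx (1/g)
  have e1 : pdx (fun q => 1 / g q) p = - pdx g p / (g p) ^ 2 := by
    have h := deriv_div (c := fun _ : ℝ => (1:ℝ)) (d := fun x => g (x, p.2))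
      (differentiableAt_const _) hgx (by simpa using hgp)
    have hpx : pdx (fun q => 1 / g q) p = deriv (fun x => (1:ℝ) / g (x, p.2)) p.1 := rfl
    rw [hpx, show (fun x => (1:ℝ) / g (x, p.2)) = (fun _ : ℝ => (1:ℝ)) / (fun x => g (x, p.2)) from rfl, h]
    have hgpp : g (p.1, p.2) = g p := by simp
    rw [hgpp]
    simp [pdx, neg_div]
  -- value of pdy (-f/g)
  have e2 : pdy (fun q => -f q / g q) p
      = (pdy (fun q => -f q) p * g p + f p * pdy g p) / (g p) ^ 2 := by
    have hnfy : DifferentiableAt ℝ (fun y => -f (p.1, y)) p.2 := hfy.neg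
    have h := deriv_div (c := fun y => -f (p.1, y)) (d := fun y => g (p.1, y))
      hnfy hgy (by simpa using hgp)
    have hpy : pdy (fun q => -f q / g q) p = deriv (fun y => -f (p.1, y) / g (p.1, y)) p.2 := rfl
    rw [hpy, show (fun y => -f (p.1, y) / g (p.1, y)) = (fun y => -f (p.1, y)) / (fun y => g (p.1, y)) from rfl, h]
    have hgpp : g (p.1, p.2) = g p := by simp
    have hfpp : f (p.1, p.2) = f p := by simp
    rw [hgpp, hfpp]
    simp [pdy]
  obtain ⟨h1, h2⟩ := hLie p hp
  have hpdx1 : pdx (fun _ : ℝ × ℝ => (1:ℝ)) p = 0 := by simp [pdx]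
  rw [hpdx1] at h1 h2
  rw [e1, e2]
  have key : - pdx g p = pdy (fun q => -f q) p * g p + f p * pdy g p := by
    have hgval : g p = b p - f p * a p := rfl
    rw [hgval]
    linear_combination (-1) * h1 - f p * h2
  rw [key]
end
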